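/- Let G be a group and (S_i)_{i ∈ ℕ} a family of admissible G-sets such that for every finite-index subgroup H ≤ G the fixed-point set (S_i)^H is empty for all but finitely many i. Then the disjoint union ⨆_{i ∈ ℕ} S_i is an admissible G-set. -/

import Mathlib

namespace Stmt13

/-- A `G`-set `S` is *admissible* if the stabilizer of every point has finite index in `G`
and, for every finite-index subgroup `H ≤ G`, the `H`-fixed point set of `S` is finite. -/
def IsAdmissible (G : Type*) [Group G] (S : Type*) [MulAction G S] : Prop :=
  (∀ s : S, (MulAction.stabilizer G s).FiniteIndex) ∧
    ∀ H : Subgroup G, H.FiniteIndex → {s : S | ∀ h ∈ H, h • s = s}.Finite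

/-- The componentwise action of `G` on the disjoint union of a family of `G`-sets. -/
instance sigmaMulAction (G : Type*) [Group G] (S : ℕ → Type*) [∀ i, MulAction G (S i)] :
    MulAction G ((i : ℕ) × S i) where
  smul g x := ⟨x.1, g • x.2⟩
  one_smul x := by
    cases x with
    | mk i y => exact congrArg (Sigma.mk i) (one_smul G y)
  mul_smul g g' x := by
    cases x with
    | mk i y => exact congrArg (Sigma.mk i) (mul_smul g g' y)

open MulAction

theorem _root_.Set.Finite.univ_sigma {ι : Type*} {α : ι → Type*} {t : ∀ i, Set (α i)}
    (hne : {i | (t i).Nonempty}.Finite) (ht : ∀ i, (t i).Finite) :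
    (Set.univ.sigma t).Finite := by
  refine (hne.biUnion fun i _ => (ht i).image (Sigma.mk i)).subset ?_
  rintro ⟨i, a⟩ ⟨-, ha⟩
  exact Set.mem_biUnion ⟨a, ha⟩ (Set.mem_image_of_mem _ ha)

/- The lemmas below concern Mathlib's `Sigma.mulAction`, which agrees definitionally with
`sigmaMulAction` on `ℕ`-indexed families. -/
section Sigma

variable {G ι : Type*} [Group G] {S : ι → Type*} [∀ i, MulAction G (S i)]

theorem stabilizer_sigma_mk (i : ι) (s : S i) :
    stabilizer G (⟨i, s⟩ : Σ i, S i) = stabilizer G s := by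
  ext g
  simp [Sigma.smul_mk]

theorem setOf_forall_smul_eq_univ_sigma (H : Subgroup G) :
    {x : Σ i, S i | ∀ h ∈ H, h • x = x} =
      Set.univ.sigma fun i => {s : S i | ∀ h ∈ H, h • s = s} := by
  ext ⟨i, s⟩
  simp [Sigma.smul_mk]

end Sigma

/-- If `(S i)` is a family of admissible `G`-sets such that for every finite-index subgroup
`H ≤ G` the `H`-fixed point set of `S i` is empty for all but finitely many `i`, then the
disjoint union `Σ i, S i` is an admissible `G`-set. -/
theorem isAdmissible_sigma (G : Type*) [Group G] (S : ℕ → Type*) [∀ i, MulAction G (S i)]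
    (hadm : ∀ i, IsAdmissible G (S i))
    (hfin : ∀ H : Subgroup G, H.FiniteIndex →
      {i : ℕ | ∃ s : S i, ∀ h ∈ H, h • s = s}.Finite) :
    IsAdmissible G ((i : ℕ) × S i) := by
  refine ⟨?_, fun H hH => ?_⟩
  · rintro ⟨i, s⟩
    exact (stabilizer_sigma_mk (G := G) i s).symm ▸ (hadm i).1 s
  · exact (setOf_forall_smul_eq_univ_sigma (S := S) H) ▸
      (hfin H hH).univ_sigma fun i => (hadm i).2 H hH

end Stmt13
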